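/- arXiv:2303.17872 — 2 statements merged into one kernel-verified Lean document; each statement's English description precedes it below -/
import Mathlib

section
/- For all u in (1/2, 1), the standard normal quantile function satisfies Φ⁻¹(u) ≤ √(2·log(1/(2(1−u)))). -/
open MeasureTheory Real

/-- Standard normal cumulative distribution function. -/
noncomputable def stdNormalCDF (z : ℝ) : ℝ :=
  ∫ t in Set.Iic z, (Real.sqrt (2 * Real.pi))⁻¹ * Real.exp (-t ^ 2 / 2)

/-- Standard normal quantile function (inverse of the cdf). -/
noncomputable def stdNormalQuantile : ℝ → ℝ := Function.invFun stdNormalCDF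

namespace StdAux

noncomputable def φ (t : ℝ) : ℝ := (Real.sqrt (2 * Real.pi))⁻¹ * Real.exp (-t ^ 2 / 2)

lemma φ_pos (t : ℝ) : 0 < φ t :=
  mul_pos (inv_pos.2 (Real.sqrt_pos.2 (by positivity))) (Real.exp_pos _)

lemma φ_int : Integrable φ := by
  have h := integrable_exp_neg_mul_sq (b := 1/2) (by norm_num)
  have : φ = fun t => (Real.sqrt (2 * Real.pi))⁻¹ * Real.exp (-(1/2) * t ^ 2) := by
    funext t; unfold φ; ring_nf
  rw [this]
  exact h.const_mul _

lemma φ_total : ∫ t, φ t = 1 := by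
  unfold φ
  rw [MeasureTheory.integral_const_mul]
  have : (fun t : ℝ => Real.exp (-t ^ 2 / 2)) = fun t => Real.exp (-(1/2) * t ^ 2) := by
    funext t; ring_nf
  rw [this, integral_gaussian]
  rw [show Real.pi / (1/2) = 2 * Real.pi by ring]
  rw [inv_mul_cancel₀ (by positivity)]

lemma φ_even (t : ℝ) : φ (-t) = φ t := by unfold φ; ring_nf

lemma half_total : ∫ t in Set.Ioi (0:ℝ), φ t = 1/2 := by
  have hs : ∫ t in Set.Iic (0:ℝ), φ t = ∫ t in Set.Ioi (0:ℝ), φ t := by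
    calc ∫ t in Set.Iic (0:ℝ), φ t = ∫ t in Set.Iic (0:ℝ), φ (-t) := by
          simp only [φ_even]
      _ = ∫ t in Set.Ioi (-(0:ℝ)), φ t := integral_comp_neg_Iic 0 φ
      _ = ∫ t in Set.Ioi (0:ℝ), φ t := by norm_num
  have hsplit : (∫ t in Set.Iic (0:ℝ), φ t) + ∫ t in Set.Ioi (0:ℝ), φ t = 1 := by
    rw [← φ_total]
    have := MeasureTheory.integral_add_compl (measurableSet_Iic (a := (0:ℝ))) φ_int
    simpa [Set.compl_Iic] using this
  linarith [hs ▸ hsplit]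

lemma F_add_le {a b : ℝ} (h : a ≤ b) :
    stdNormalCDF b = stdNormalCDF a + ∫ t in a..b, φ t := by
  rw [intervalIntegral.integral_of_le h]
  show (∫ t in Set.Iic b, φ t) = _
  rw [← Set.Iic_union_Ioc_eq_Iic h,
    MeasureTheory.setIntegral_union (Set.Iic_disjoint_Ioc le_rfl) measurableSet_Ioc
      φ_int.integrableOn φ_int.integrableOn]
  rfl

lemma F_strictMono : StrictMono stdNormalCDF := by
  intro a b hab
  rw [F_add_le hab.le]
  have := intervalIntegral.intervalIntegral_pos_of_pos (f := φ) φ_int.intervalIntegrable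
    φ_pos hab
  linarith

lemma F_cont : Continuous stdNormalCDF := by
  have : stdNormalCDF = fun b => stdNormalCDF 0 + ∫ t in (0:ℝ)..b, φ t := by
    funext b
    rcases le_total 0 b with h | h
    · exact F_add_le h
    · have := F_add_le h
      rw [intervalIntegral.integral_symm] at this
      linarith
  rw [this]
  exact continuous_const.add (φ_int.continuous_primitive 0)

lemma F_tail (z : ℝ) : stdNormalCDF z + ∫ t in Set.Ioi z, φ t = 1 := by
  rw [← φ_total]
  have := MeasureTheory.integral_add_compl (measurableSet_Iic (a := z)) φ_int
  simp only [Set.compl_Iic] at this; exact this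

lemma F_zero : stdNormalCDF 0 = 1/2 := by
  have := F_tail 0
  rw [half_total] at this; linarith

lemma shift_int (z : ℝ) : ∫ t in Set.Ioi z, φ (t - z) = 1/2 := by
  have hpre : (fun x : ℝ => x + z) ⁻¹' Set.Ioi z = Set.Ioi 0 := by
    ext x; simp
  have hmp : MeasurePreserving (fun x : ℝ => x + z) volume volume :=
    measurePreserving_add_right volume z
  have hemb : MeasurableEmbedding (fun x : ℝ => x + z) :=
    (MeasurableEquiv.addRight z).measurableEmbedding
  have := hmp.setIntegral_preimage_emb hemb (fun t => φ (t - z)) (Set.Ioi z)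
  rw [hpre] at this
  simp only [add_sub_cancel_right] at this
  rw [← this, half_total]

lemma tail_bound {z : ℝ} (hz : 0 ≤ z) :
    ∫ t in Set.Ioi z, φ t ≤ (1/2) * Real.exp (-z^2/2) := by
  have hgint : Integrable (fun t => Real.exp (-z^2/2) * φ (t - z)) :=
    (φ_int.comp_sub_right z).const_mul _
  have hle : ∀ t ∈ Set.Ioi z, φ t ≤ Real.exp (-z^2/2) * φ (t - z) := by
    intro t ht
    have ht' : z ≤ t := le_of_lt ht
    unfold φ
    rw [show Real.exp (-z^2/2) * ((Real.sqrt (2 * Real.pi))⁻¹ * Real.exp (-(t-z)^2/2))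
        = (Real.sqrt (2 * Real.pi))⁻¹ * (Real.exp (-z^2/2) * Real.exp (-(t-z)^2/2)) by ring,
      ← Real.exp_add]
    apply mul_le_mul_of_nonneg_left _ (by positivity)
    apply Real.exp_le_exp.2
    nlinarith
  calc ∫ t in Set.Ioi z, φ t ≤ ∫ t in Set.Ioi z, Real.exp (-z^2/2) * φ (t - z) :=
        MeasureTheory.setIntegral_mono_on φ_int.integrableOn hgint.integrableOn
          measurableSet_Ioi hle
    _ = Real.exp (-z^2/2) * ∫ t in Set.Ioi z, φ (t - z) := by
        rw [MeasureTheory.integral_const_mul]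
    _ = (1/2) * Real.exp (-z^2/2) := by rw [shift_int]; ring

end StdAux

theorem stmt0 :
    ∀ u ∈ Set.Ioo (1 / 2 : ℝ) 1,
      stdNormalQuantile u ≤ Real.sqrt (2 * Real.log (1 / (2 * (1 - u)))) := by
  rintro u ⟨hu1, hu2⟩
  have h1u : 0 < 1 - u := by linarith
  have h2u : 0 < 2 * (1 - u) := by linarith
  set L := Real.log (1 / (2 * (1 - u))) with hL
  have hLnn : 0 ≤ L := by
    apply Real.log_nonneg
    rw [le_div_iff₀ h2u]; linarith
  set z₀ := Real.sqrt (2 * L) with hz₀def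
  have hz₀ : 0 ≤ z₀ := Real.sqrt_nonneg _
  have hsq : z₀ ^ 2 = 2 * L := Real.sq_sqrt (by linarith)
  have hexp : Real.exp (-z₀^2/2) = 2 * (1 - u) := by
    rw [hsq, show -(2*L)/2 = -L by ring, hL, one_div, Real.log_inv, neg_neg,
      Real.exp_log h2u]
  have hFz₀ : u ≤ stdNormalCDF z₀ := by
    have htail := StdAux.tail_bound hz₀
    have := StdAux.F_tail z₀
    rw [hexp] at htail
    linarith
  have hF0 : stdNormalCDF 0 ≤ u := by rw [StdAux.F_zero]; linarith
  obtain ⟨z, hzmem, hFz⟩ :=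
    intermediate_value_Icc hz₀ StdAux.F_cont.continuousOn (Set.mem_Icc.2 ⟨hF0, hFz₀⟩)
  have hq : stdNormalQuantile u = z := by
    rw [show u = stdNormalCDF z from hFz.symm]
    exact Function.leftInverse_invFun StdAux.F_strictMono.injective z
  rw [hq]
  exact hzmem.2
end

section
/- Let (ρ̂₁, ρ̂₂) satisfy √n((ρ̂₁, ρ̂₂) − (ρ, ρ)) → N₂(0, Σ) in distribution with ρ > 0 and limit (U,V). Then √n(max(|ρ̂₁|, |ρ̂₂|) − ρ) converges in distribution to max(U, V). -/
open MeasureTheory Real ProbabilityTheory Filter Topology BoundedContinuousFunction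

/-- cutoff function: 1 on `(-∞, -K]`, 0 on `[1-K, ∞)`. -/
noncomputable def psiK (K : ℕ) : ℝ → ℝ := fun z => max 0 (min 1 (-z - K + 1))

lemma psiK_cont (K : ℕ) : Continuous (psiK K) := by
  unfold psiK; fun_prop

lemma psiK_nonneg (K : ℕ) (z : ℝ) : 0 ≤ psiK K z := le_max_left _ _

lemma psiK_le_one (K : ℕ) (z : ℝ) : psiK K z ≤ 1 :=
  max_le zero_le_one (min_le_left _ _)

lemma psiK_one {K : ℕ} {z : ℝ} (h : z ≤ -(K : ℝ)) : psiK K z = 1 := by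
  unfold psiK
  rw [min_eq_left (by linarith), max_eq_right zero_le_one]

lemma psiK_zero {K : ℕ} {z : ℝ} (h : (1 : ℝ) - K ≤ z) : psiK K z = 0 := by
  unfold psiK
  rw [max_eq_left]
  exact (min_le_right _ _).trans (by linarith)

/-- the key algebraic identity. -/
lemma key_eq (r p x y : ℝ) (hr : 0 ≤ r) :
    r * (max |x| |y| - p) =
      max (max (r * (x - p)) (r * (y - p)))
        (-(min (r * (x - p)) (r * (y - p))) - 2 * (r * p)) := by
  have habs : ∀ z : ℝ, r * (|z| - p) = max (r * (z - p)) (-(r * (z - p)) - 2 * (r * p)) := by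
    intro z
    rw [abs_eq_max_neg, ← max_sub_sub_right, mul_max_of_nonneg _ _ hr]
    congr 1; ring
  rw [← max_sub_sub_right, mul_max_of_nonneg _ _ hr, habs, habs, max_max_max_comm]
  congr 1
  rw [← max_neg_neg, ← max_sub_sub_right]

/-- the key pointwise bound. -/
lemma key_bound (g : ℝ →ᵇ ℝ) (K : ℕ) (c A B : ℝ) (hc : (K : ℝ) ≤ c) :
    |g (max (max A B) (-(min A B) - 2 * c)) - g (max A B)| ≤ 2 * ‖g‖ * psiK K (min A B) := by
  rcases le_or_gt (-c) (min A B) with h | h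
  · have h1 : -(min A B) - 2 * c ≤ max A B := by
      have h2 : min A B ≤ max A B := min_le_max
      have h3 : (0:ℝ) ≤ c := le_trans (by positivity) hc
      linarith
    rw [max_eq_left h1, sub_self, abs_zero]
    have := psiK_nonneg K (min A B)
    positivity
  · have h1 : min A B ≤ -(K : ℝ) := by linarith
    rw [psiK_one h1, mul_one]
    calc |g _ - g _| ≤ ‖g _‖ + ‖g _‖ := by
          rw [← Real.norm_eq_abs]; exact norm_sub_le _ _
      _ ≤ ‖g‖ + ‖g‖ := add_le_add (g.norm_coe_le_norm _) (g.norm_coe_le_norm _)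
      _ = 2 * ‖g‖ := by ring

lemma aesm_of_arctan {Ω : Type*} [MeasurableSpace Ω] {μ : Measure Ω} {f : Ω → ℝ}
    (h : AEStronglyMeasurable (fun ω => Real.arctan (f ω)) μ) :
    AEMeasurable f μ := by
  obtain ⟨h', hsm, heq⟩ := h
  have htan : Measurable Real.tan := by
    have : Real.tan = fun x => Real.sin x / Real.cos x := by
      funext x; exact Real.tan_eq_sin_div_cos x
    rw [this]
    exact Real.measurable_sin.div Real.measurable_cos
  refine ⟨fun ω => Real.tan (h' ω), htan.comp hsm.measurable, ?_⟩
  filter_upwards [heq] with ω hω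
  rw [← hω]
  exact (Real.tan_arctan (f ω)).symm

lemma ev_aesm {Ω : Type*} [MeasurableSpace Ω] {μ : Measure Ω} (f : ℕ → Ω → ℝ) (l : ℝ)
    (h1 : Tendsto (fun n => ∫ ω, f n ω ∂μ) atTop (𝓝 l))
    (h2 : Tendsto (fun n => ∫ ω, (1 + f n ω) ∂μ) atTop (𝓝 (1 + l))) :
    ∀ᶠ n in atTop, AEStronglyMeasurable (f n) μ := by
  by_contra hcon
  rw [Filter.not_eventually] at hcon
  have key : ∀ n, ¬ AEStronglyMeasurable (f n) μ →
      (∫ ω, f n ω ∂μ) = 0 ∧ (∫ ω, (1 + f n ω) ∂μ) = 0 := by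
    intro n hn
    constructor
    · exact integral_undef (fun hint => hn hint.1)
    · refine integral_undef (fun hint => hn ?_)
      have h3 : AEStronglyMeasurable (fun ω => (1 + f n ω) - 1) μ :=
        hint.1.sub aestronglyMeasurable_const
      simpa using h3
  have h0 : ∃ᶠ n in atTop, (fun n => ∫ ω, f n ω ∂μ) n ∈ ({0} : Set ℝ) :=
    hcon.mono (fun n hn => (key n hn).1)
  have hl : l ∈ closure ({0} : Set ℝ) := mem_closure_of_frequently_of_tendsto h0 h1
  have h0' : ∃ᶠ n in atTop, (fun n => ∫ ω, (1 + f n ω) ∂μ) n ∈ ({0} : Set ℝ) :=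
    hcon.mono (fun n hn => (key n hn).2)
  have hl' : (1 + l) ∈ closure ({0} : Set ℝ) := mem_closure_of_frequently_of_tendsto h0' h2
  rw [closure_singleton, Set.mem_singleton_iff] at hl hl'
  linarith

theorem stmt14 {Ω : Type*} [MeasurableSpace Ω] (μ : Measure Ω) [IsProbabilityMeasure μ]
    (ρ : ℝ) (hρ : 0 < ρ)
    (ρhat₁ ρhat₂ : ℕ → Ω → ℝ)
    (X Y : Ω → ℝ) (hX : Measurable X) (hY : Measurable Y)
    (hXlaw : μ.map X = gaussianReal 0 1) (hYlaw : μ.map Y = gaussianReal 0 1)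
    (hindep : IndepFun X Y μ)
    (a b c d : ℝ) (U V : Ω → ℝ)
    (hU : U = fun ω => a * X ω + b * Y ω) (hV : V = fun ω => c * X ω + d * Y ω)
    -- √n((ρ̂₁,ρ̂₂) − (ρ,ρ)) converges in distribution to (U,V):
    (hconv : ∀ g : (ℝ × ℝ) →ᵇ ℝ,
      Tendsto
        (fun n : ℕ => ∫ ω,
          g (Real.sqrt n * (ρhat₁ n ω - ρ), Real.sqrt n * (ρhat₂ n ω - ρ)) ∂μ)
        atTop (𝓝 (∫ ω, g (U ω, V ω) ∂μ))) :
    -- √n(max(|ρ̂₁|,|ρ̂₂|) − ρ) converges in distribution to max(U,V):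
    ∀ g : ℝ →ᵇ ℝ,
      Tendsto
        (fun n : ℕ => ∫ ω,
          g (Real.sqrt n * (max |ρhat₁ n ω| |ρhat₂ n ω| - ρ)) ∂μ)
        atTop (𝓝 (∫ ω, g (max (U ω) (V ω)) ∂μ)) := by
  intro g
  classical
  have hUm : Measurable U := by rw [hU]; fun_prop
  have hVm : Measurable V := by rw [hV]; fun_prop
  -- arctan as a bounded continuous function
  have harctan_abs : ∀ x : ℝ, |Real.arctan x| ≤ π / 2 := fun x =>
    abs_le.mpr ⟨(Real.neg_pi_div_two_lt_arctan x).le, (Real.arctan_lt_pi_div_two x).le⟩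
  let atC : ℝ →ᵇ ℝ := BoundedContinuousFunction.mkOfBound
    ⟨Real.arctan, Real.continuous_arctan⟩ π (by
      intro x y
      rw [Real.dist_eq]
      calc |Real.arctan x - Real.arctan y| ≤ |Real.arctan x| + |Real.arctan y| := abs_sub _ _
        _ ≤ π / 2 + π / 2 := add_le_add (harctan_abs x) (harctan_abs y)
        _ = π := by ring)
  have hatC : ∀ x : ℝ, atC x = Real.arctan x := fun _ => rfl
  -- integrability of arctan of U, V
  have hintat : ∀ (W : Ω → ℝ), Measurable W → Integrable (fun ω => Real.arctan (W ω)) μ := by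
    intro W hW
    refine (integrable_const (π / 2)).mono'
      (Real.measurable_arctan.comp hW).aestronglyMeasurable ?_
    filter_upwards with ω
    rw [Real.norm_eq_abs]
    exact harctan_abs _
  -- eventual a.e.-measurability of the standardized variables
  have hev₁ : ∀ᶠ n : ℕ in atTop,
      AEStronglyMeasurable (fun ω => Real.arctan (Real.sqrt n * (ρhat₁ n ω - ρ))) μ := by
    have hφ := hconv (atC.compContinuous (ContinuousMap.fst (α := ℝ) (β := ℝ)))
    have hφ' := hconv (1 + atC.compContinuous (ContinuousMap.fst (α := ℝ) (β := ℝ)))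
    refine ev_aesm (fun (n : ℕ) ω => Real.arctan (Real.sqrt n * (ρhat₁ n ω - ρ)))
      (∫ ω, Real.arctan (U ω) ∂μ) hφ ?_
    have heq : (∫ ω, (1 + Real.arctan (U ω)) ∂μ) = 1 + ∫ ω, Real.arctan (U ω) ∂μ := by
      rw [integral_add (integrable_const 1) (hintat U hUm), integral_const]
      simp
    rw [← heq]
    exact hφ'
  have hev₂ : ∀ᶠ n : ℕ in atTop,
      AEStronglyMeasurable (fun ω => Real.arctan (Real.sqrt n * (ρhat₂ n ω - ρ))) μ := by
    have hφ := hconv (atC.compContinuous (ContinuousMap.snd (α := ℝ) (β := ℝ)))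
    have hφ' := hconv (1 + atC.compContinuous (ContinuousMap.snd (α := ℝ) (β := ℝ)))
    refine ev_aesm (fun (n : ℕ) ω => Real.arctan (Real.sqrt n * (ρhat₂ n ω - ρ)))
      (∫ ω, Real.arctan (V ω) ∂μ) hφ ?_
    have heq : (∫ ω, (1 + Real.arctan (V ω)) ∂μ) = 1 + ∫ ω, Real.arctan (V ω) ∂μ := by
      rw [integral_add (integrable_const 1) (hintat V hVm), integral_const]
      simp
    rw [← heq]
    exact hφ'
  have hevs : ∀ᶠ n : ℕ in atTop, AEMeasurable (fun ω => Real.sqrt n * (ρhat₁ n ω - ρ)) μ :=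
    hev₁.mono (fun n hn => aesm_of_arctan hn)
  have hevt : ∀ᶠ n : ℕ in atTop, AEMeasurable (fun ω => Real.sqrt n * (ρhat₂ n ω - ρ)) μ :=
    hev₂.mono (fun n hn => aesm_of_arctan hn)
  -- the bounded continuous function (x,y) ↦ g (max x y)
  let maxC : C(ℝ × ℝ, ℝ) := ⟨fun q => max q.1 q.2, continuous_fst.max continuous_snd⟩
  let G : (ℝ × ℝ) →ᵇ ℝ := g.compContinuous maxC
  have hGapp : ∀ x y : ℝ, G (x, y) = g (max x y) := fun _ _ => rfl
  -- the dominating bounded continuous functions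
  have hΦbound : ∀ (K : ℕ) (q : ℝ × ℝ), |2 * ‖g‖ * psiK K (min q.1 q.2)| ≤ 2 * ‖g‖ := by
    intro K q
    rw [abs_of_nonneg (mul_nonneg (by positivity) (psiK_nonneg K (min q.1 q.2)))]
    calc 2 * ‖g‖ * psiK K (min q.1 q.2) ≤ 2 * ‖g‖ * 1 := by
          have := psiK_le_one K (min q.1 q.2)
          have := psiK_nonneg K (min q.1 q.2)
          nlinarith [norm_nonneg g]
      _ = 2 * ‖g‖ := mul_one _
  let Φ : ℕ → (ℝ × ℝ) →ᵇ ℝ := fun K => BoundedContinuousFunction.mkOfBound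
    ⟨fun q => 2 * ‖g‖ * psiK K (min q.1 q.2),
      by exact (continuous_const.mul ((psiK_cont K).comp (continuous_fst.min continuous_snd)))⟩
    (2 * (2 * ‖g‖)) (by
      intro x y
      rw [Real.dist_eq]
      calc |2 * ‖g‖ * psiK K (min x.1 x.2) - 2 * ‖g‖ * psiK K (min y.1 y.2)|
          ≤ |2 * ‖g‖ * psiK K (min x.1 x.2)| + |2 * ‖g‖ * psiK K (min y.1 y.2)| := abs_sub _ _
        _ ≤ 2 * ‖g‖ + 2 * ‖g‖ := add_le_add (hΦbound K x) (hΦbound K y)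
        _ = 2 * (2 * ‖g‖) := by ring)
  have hΦapp : ∀ (K : ℕ) (q : ℝ × ℝ), Φ K q = 2 * ‖g‖ * psiK K (min q.1 q.2) :=
    fun _ _ => rfl
  -- dominated convergence in K
  have hDCT : Tendsto (fun K : ℕ => ∫ ω, (Φ K) (U ω, V ω) ∂μ) atTop (𝓝 0) := by
    have h0 : (0 : ℝ) = ∫ ω, (0 : ℝ) ∂μ := by simp
    rw [h0]
    refine tendsto_integral_of_dominated_convergence (fun _ => 2 * ‖g‖)
      (fun K => ?_) (integrable_const _) (fun K => ?_) ?_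
    · exact (continuous_const.mul ((psiK_cont K).comp
        (continuous_fst.min continuous_snd))).measurable.comp_aemeasurable
        ((hUm.prodMk hVm).aemeasurable) |>.aestronglyMeasurable
    · filter_upwards with ω
      rw [Real.norm_eq_abs]
      exact hΦbound K (U ω, V ω)
    · filter_upwards with ω
      have : ∀ᶠ K : ℕ in atTop, (Φ K) (U ω, V ω) = 0 := by
        filter_upwards [eventually_ge_atTop (⌈(1 : ℝ) - min (U ω) (V ω)⌉₊)] with K hK
        rw [hΦapp, psiK_zero, mul_zero]
        have h1 : ((1 : ℝ) - min (U ω) (V ω)) ≤ K :=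
          le_trans (Nat.le_ceil _) (by exact_mod_cast hK)
        linarith
      exact Tendsto.congr' (this.mono fun K hK => hK.symm) tendsto_const_nhds
  -- the main estimate
  have hmain : Tendsto (fun n : ℕ =>
      (∫ ω, g (Real.sqrt n * (max |ρhat₁ n ω| |ρhat₂ n ω| - ρ)) ∂μ) -
        ∫ ω, G (Real.sqrt n * (ρhat₁ n ω - ρ), Real.sqrt n * (ρhat₂ n ω - ρ)) ∂μ)
      atTop (𝓝 0) := by
    rw [NormedAddCommGroup.tendsto_nhds_zero]
    intro ε hε
    obtain ⟨K, hK⟩ : ∃ K : ℕ, (∫ ω, (Φ K) (U ω, V ω) ∂μ) < ε / 2 :=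
      (hDCT.eventually_lt_const (by linarith)).exists
    have hΦlt : ∀ᶠ n : ℕ in atTop,
        (∫ ω, (Φ K) (Real.sqrt n * (ρhat₁ n ω - ρ), Real.sqrt n * (ρhat₂ n ω - ρ)) ∂μ) < ε :=
      (hconv (Φ K)).eventually_lt_const (by linarith)
    have hsqrt : ∀ᶠ n : ℕ in atTop, (K : ℝ) ≤ Real.sqrt n * ρ := by
      filter_upwards [eventually_ge_atTop ⌈((K : ℝ) / ρ) ^ 2⌉₊] with n hn
      have h1 : ((K : ℝ) / ρ) ^ 2 ≤ (n : ℝ) :=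
        le_trans (Nat.le_ceil _) (by exact_mod_cast hn)
      have h2 : (K : ℝ) / ρ ≤ Real.sqrt n := by
        have := Real.sqrt_le_sqrt h1
        rwa [Real.sqrt_sq (by positivity)] at this
      calc (K : ℝ) = (K : ℝ) / ρ * ρ := by field_simp
        _ ≤ Real.sqrt n * ρ := by
          exact mul_le_mul_of_nonneg_right h2 hρ.le
    filter_upwards [hevs, hevt, hΦlt, hsqrt] with n hsn htn hΦn hcn
    set s : Ω → ℝ := fun ω => Real.sqrt n * (ρhat₁ n ω - ρ) with hs_def
    set t : Ω → ℝ := fun ω => Real.sqrt n * (ρhat₂ n ω - ρ) with ht_def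
    have hr : (0 : ℝ) ≤ Real.sqrt n := Real.sqrt_nonneg _
    have hEeq : ∀ ω, Real.sqrt n * (max |ρhat₁ n ω| |ρhat₂ n ω| - ρ)
        = max (max (s ω) (t ω)) (-(min (s ω) (t ω)) - 2 * (Real.sqrt n * ρ)) := by
      intro ω
      exact key_eq (Real.sqrt n) ρ (ρhat₁ n ω) (ρhat₂ n ω) hr
    -- integrability
    have hbdd : ∀ (h : Ω → ℝ), AEMeasurable h μ → Integrable (fun ω => g (h ω)) μ := by
      intro h hh
      refine (integrable_const ‖g‖).mono'
        ((g.continuous.measurable.comp_aemeasurable hh).aestronglyMeasurable) ?_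
      filter_upwards with ω
      exact g.norm_coe_le_norm _
    have hint1 : Integrable (fun ω =>
        g (max (max (s ω) (t ω)) (-(min (s ω) (t ω)) - 2 * (Real.sqrt n * ρ)))) μ :=
      hbdd _ (((hsn.max htn).max (((hsn.min htn).neg).sub aemeasurable_const)))
    have hint2 : Integrable (fun ω => g (max (s ω) (t ω))) μ := hbdd _ (hsn.max htn)
    have hint3 : Integrable (fun ω => (Φ K) (s ω, t ω)) μ := by
      refine (integrable_const (2 * ‖g‖)).mono'
        ((continuous_const.mul ((psiK_cont K).comp
          (continuous_fst.min continuous_snd))).measurable.comp_aemeasurable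
          (hsn.prodMk htn)).aestronglyMeasurable ?_
      filter_upwards with ω
      rw [Real.norm_eq_abs]
      exact hΦbound K (s ω, t ω)
    have hrw1 : (∫ ω, g (Real.sqrt n * (max |ρhat₁ n ω| |ρhat₂ n ω| - ρ)) ∂μ)
        = ∫ ω, g (max (max (s ω) (t ω)) (-(min (s ω) (t ω)) - 2 * (Real.sqrt n * ρ))) ∂μ := by
      congr 1
      funext ω
      rw [hEeq ω]
    have hrw2 : (∫ ω, G (Real.sqrt n * (ρhat₁ n ω - ρ), Real.sqrt n * (ρhat₂ n ω - ρ)) ∂μ)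
        = ∫ ω, g (max (s ω) (t ω)) ∂μ := rfl
    rw [hrw1, hrw2]
    have hkey : ‖(∫ ω, g (max (max (s ω) (t ω)) (-(min (s ω) (t ω)) - 2 * (Real.sqrt n * ρ))) ∂μ)
        - ∫ ω, g (max (s ω) (t ω)) ∂μ‖ ≤ ∫ ω, (Φ K) (s ω, t ω) ∂μ := by
      rw [← integral_sub hint1 hint2]
      calc ‖∫ ω, (g (max (max (s ω) (t ω)) (-(min (s ω) (t ω)) - 2 * (Real.sqrt n * ρ)))
              - g (max (s ω) (t ω))) ∂μ‖
          ≤ ∫ ω, ‖g (max (max (s ω) (t ω)) (-(min (s ω) (t ω)) - 2 * (Real.sqrt n * ρ)))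
              - g (max (s ω) (t ω))‖ ∂μ := norm_integral_le_integral_norm _
        _ ≤ ∫ ω, (Φ K) (s ω, t ω) ∂μ := by
            refine integral_mono (hint1.sub hint2).norm hint3 ?_
            intro ω
            have hkb := key_bound g K (Real.sqrt n * ρ) (s ω) (t ω) hcn
            simpa [Real.norm_eq_abs, hΦapp] using hkb
    exact lt_of_le_of_lt hkey hΦn
  -- conclusion
  have hG := hconv G
  have hfinal := hmain.add hG
  rw [zero_add] at hfinal
  have heq : (fun n : ℕ =>
      ((∫ ω, g (Real.sqrt n * (max |ρhat₁ n ω| |ρhat₂ n ω| - ρ)) ∂μ) -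
        ∫ ω, G (Real.sqrt n * (ρhat₁ n ω - ρ), Real.sqrt n * (ρhat₂ n ω - ρ)) ∂μ) +
        ∫ ω, G (Real.sqrt n * (ρhat₁ n ω - ρ), Real.sqrt n * (ρhat₂ n ω - ρ)) ∂μ)
      = fun n : ℕ => ∫ ω, g (Real.sqrt n * (max |ρhat₁ n ω| |ρhat₂ n ω| - ρ)) ∂μ := by
    funext n; ring
  rw [heq] at hfinal
  exact hfinal
end
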